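/- arXiv:2410.04887 — 3 statements merged into one kernel-verified Lean document; each statement's English description precedes it below -/
import Mathlib

section
/- Let A ∈ ℝ^{K×n} and B ∈ ℝ^{n×m} be real matrices with ‖A^⊤A − BB^⊤‖_op ≤ ε, and let P = A^+A be the orthogonal projection onto the row space of A (A^+ the Moore–Penrose pseudoinverse). Then ‖(I_n − P)B‖_F² ≤ tr(I_n − P)·ε ≤ n·ε. -/
open Matrix Finset Real

/-- Frobenius norm of a real matrix. -/
noncomputable def frobNorm {m n : ℕ} (A : Matrix (Fin m) (Fin n) ℝ) : ℝ :=
  Real.sqrt (∑ i, ∑ j, (A i j) ^ 2)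

/-- Operator (spectral) norm of a real matrix. -/
noncomputable def opNorm {m n : ℕ} (A : Matrix (Fin m) (Fin n) ℝ) : ℝ :=
  sSup {x : ℝ | ∃ v : Fin n → ℝ, (∑ i, v i ^ 2) ≤ 1 ∧ x = Real.sqrt (∑ i, (A.mulVec v i) ^ 2)}

theorem Matrix.isHermitian_transpose_mul_self {m n : Type*} [Fintype m]
    (A : Matrix m n ℝ) : (Aᵀ * A).IsHermitian := by
  rw [Matrix.IsHermitian, Matrix.conjTranspose_mul]
  simp [Matrix.conjTranspose_eq_transpose_of_trivial]

/-- The singular values of a real matrix, in non-increasing order (indexed by columns). -/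
noncomputable def svals {m n : ℕ} (A : Matrix (Fin m) (Fin n) ℝ) : Fin n → ℝ := fun i =>
  Real.sqrt ((Matrix.isHermitian_transpose_mul_self A).eigenvalues
    (Tuple.sort ((Matrix.isHermitian_transpose_mul_self A).eigenvalues) i.rev))

/-- `sval A k` is the `k`-th largest singular value of `A` (1-indexed). -/
noncomputable def sval {m n : ℕ} (A : Matrix (Fin m) (Fin n) ℝ) (k : ℕ) : ℝ :=
  if h : k - 1 < n then svals A ⟨k - 1, h⟩ else 0

/-- Smallest singular value of a (possibly rectangular) matrix. -/
noncomputable def smin {m n : ℕ} (A : Matrix (Fin m) (Fin n) ℝ) : ℝ :=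
  sval A (min m n)

/-- Condition number: the ratio between the largest and the smallest *nonzero*
singular values, i.e. the supremum of ratios of nonzero singular values. -/
noncomputable def kappa {m n : ℕ} (A : Matrix (Fin m) (Fin n) ℝ) : ℝ :=
  sSup {x : ℝ | ∃ i j : Fin n, svals A i ≠ 0 ∧ svals A j ≠ 0 ∧ x = svals A i / svals A j}

/-- `B` is the Moore–Penrose pseudoinverse of `A`. -/
def IsMPInv {m n : ℕ} (A : Matrix (Fin m) (Fin n) ℝ) (B : Matrix (Fin n) (Fin m) ℝ) : Prop :=
  A * B * A = A ∧ B * A * B = B ∧ (A * B)ᵀ = A * B ∧ (B * A)ᵀ = B * A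

/-!
Write `M = AᵀA − BBᵀ` and `Q = I − A⁺A`. The Penrose equations make `Q` an orthogonal
projection with `AQ = 0`, so `QBBᵀQᵀ = −QMQᵀ` and `‖QB‖_F² = −∑ᵢ qᵢᵀ M qᵢ` over the rows `qᵢ`
of `Q`. Each term is at most `‖M‖_op ‖qᵢ‖²`, and `∑ᵢ ‖qᵢ‖² = tr(QQᵀ) = tr Q`. Finally
`tr Q = n − tr(A⁺A) ≤ n`, as the trace of a projection is a sum of squares.
-/

open scoped RealInnerProductSpace

lemma opNorm_eq_norm_toEuclideanCLM {n : ℕ} (M : Matrix (Fin n) (Fin n) ℝ) :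
    opNorm M = ‖toEuclideanCLM (𝕜 := ℝ) M‖ := by
  rw [opNorm, ← (toEuclideanCLM (𝕜 := ℝ) M).sSup_unitClosedBall_eq_norm]
  congr 1
  ext x
  simp only [Set.mem_ofPred_eq, Set.mem_image, Metric.mem_closedBall, dist_zero_right]
  constructor
  · rintro ⟨v, hv, rfl⟩
    refine ⟨WithLp.toLp 2 v, ?_, ?_⟩
    · simpa [EuclideanSpace.norm_eq] using hv
    · simp [EuclideanSpace.norm_eq]
  · rintro ⟨v, hv, rfl⟩
    refine ⟨WithLp.ofLp v, ?_, ?_⟩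
    · simpa [EuclideanSpace.norm_eq] using hv
    · simp [EuclideanSpace.norm_eq]

lemma opNorm_nonneg {n : ℕ} (M : Matrix (Fin n) (Fin n) ℝ) : 0 ≤ opNorm M :=
  opNorm_eq_norm_toEuclideanCLM M ▸ norm_nonneg _

lemma neg_dotProduct_mulVec_le {n : ℕ} (M : Matrix (Fin n) (Fin n) ℝ) (v : Fin n → ℝ) :
    -(v ⬝ᵥ M *ᵥ v) ≤ opNorm M * (v ⬝ᵥ v) := by
  set x : EuclideanSpace ℝ (Fin n) := WithLp.toLp 2 v
  set T := toEuclideanCLM (𝕜 := ℝ) M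
  have hquad : v ⬝ᵥ M *ᵥ v = ⟪x, T x⟫ := (inner_toEuclideanCLM M x x).symm
  have hnorm : v ⬝ᵥ v = ‖x‖ ^ 2 := by
    rw [← real_inner_self_eq_norm_sq, ← one_mulVec v, ← inner_toEuclideanCLM]
    simp [x]
  calc -(v ⬝ᵥ M *ᵥ v) ≤ ‖x‖ * ‖T x‖ := hquad ▸ (neg_le_abs _).trans (abs_real_inner_le_norm _ _)
    _ ≤ ‖x‖ * (‖T‖ * ‖x‖) := by gcongr; exact T.le_opNorm x
    _ = opNorm M * (v ⬝ᵥ v) := by rw [opNorm_eq_norm_toEuclideanCLM, hnorm]; ring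

lemma frobNorm_sq {m n : ℕ} (X : Matrix (Fin m) (Fin n) ℝ) :
    frobNorm X ^ 2 = trace (X * Xᵀ) := by
  rw [frobNorm, Real.sq_sqrt (by positivity)]
  simp [trace, mul_apply, sq]

lemma neg_trace_mul_mul_transpose_le {m n : ℕ} (X : Matrix (Fin m) (Fin n) ℝ)
    (M : Matrix (Fin n) (Fin n) ℝ) :
    -trace (X * M * Xᵀ) ≤ opNorm M * frobNorm X ^ 2 := by
  have hquad : ∀ i, (X * M * Xᵀ) i i = X i ⬝ᵥ M *ᵥ X i := by
    intro i
    rw [Matrix.mul_assoc]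
    simp [mul_apply, mulVec, dotProduct]
  have hsq : ∀ i, (X * Xᵀ) i i = X i ⬝ᵥ X i := fun i => by simp [mul_apply, dotProduct]
  rw [frobNorm_sq, trace, trace, ← Finset.sum_neg_distrib, Finset.mul_sum]
  refine Finset.sum_le_sum fun i _ => ?_
  simpa only [diag_apply, hquad, hsq] using neg_dotProduct_mulVec_le M (X i)

lemma IsStarProjection.transpose_eq {ι : Type*} [Fintype ι] {P : Matrix ι ι ℝ}
    (hP : IsStarProjection P) : Pᵀ = P := by
  simpa [star_eq_conjTranspose] using hP.isSelfAdjoint.star_eq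

lemma IsStarProjection.trace_eq_frobNorm_sq {n : ℕ} {P : Matrix (Fin n) (Fin n) ℝ}
    (hP : IsStarProjection P) : trace P = frobNorm P ^ 2 := by
  rw [frobNorm_sq, hP.transpose_eq, hP.isIdempotentElem.eq]

lemma IsStarProjection.trace_nonneg {n : ℕ} {P : Matrix (Fin n) (Fin n) ℝ}
    (hP : IsStarProjection P) : 0 ≤ trace P :=
  hP.trace_eq_frobNorm_sq ▸ sq_nonneg _

lemma IsStarProjection.trace_le {n : ℕ} {P : Matrix (Fin n) (Fin n) ℝ}
    (hP : IsStarProjection P) : trace P ≤ n := by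
  have := hP.one_sub.trace_nonneg
  rw [trace_sub, trace_one, Fintype.card_fin] at this
  linarith

lemma IsMPInv.isStarProjection {m n : ℕ} {A : Matrix (Fin m) (Fin n) ℝ}
    {Ap : Matrix (Fin n) (Fin m) ℝ} (h : IsMPInv A Ap) : IsStarProjection (Ap * A) where
  isIdempotentElem := by
    rw [IsIdempotentElem, Matrix.mul_assoc, ← Matrix.mul_assoc A, h.1]
  isSelfAdjoint := by
    simpa [IsSelfAdjoint, star_eq_conjTranspose] using h.2.2.2

lemma IsMPInv.mul_one_sub_mul {m n : ℕ} {A : Matrix (Fin m) (Fin n) ℝ}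
    {Ap : Matrix (Fin n) (Fin m) ℝ} (h : IsMPInv A Ap) : A * (1 - Ap * A) = 0 := by
  rw [Matrix.mul_sub, Matrix.mul_one, ← Matrix.mul_assoc, h.1, sub_self]

/-- if `‖AᵀA − BBᵀ‖_op ≤ ε`, the part of `B` in the kernel of `A`
(i.e. `(I − A⁺A)B`) is small in Frobenius norm. -/
theorem statement5
    (K n m : ℕ)
    (A : Matrix (Fin K) (Fin n) ℝ) (B : Matrix (Fin n) (Fin m) ℝ)
    (ε : ℝ)
    (hε : opNorm (Aᵀ * A - B * Bᵀ) ≤ ε)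
    (Ap : Matrix (Fin n) (Fin K) ℝ)
    (hAp : IsMPInv A Ap) :
    frobNorm (((1 : Matrix (Fin n) (Fin n) ℝ) - Ap * A) * B) ^ 2 ≤
      Matrix.trace ((1 : Matrix (Fin n) (Fin n) ℝ) - Ap * A) * ε ∧
    Matrix.trace ((1 : Matrix (Fin n) (Fin n) ℝ) - Ap * A) * ε ≤ (n : ℝ) * ε := by
  set Q : Matrix (Fin n) (Fin n) ℝ := 1 - Ap * A
  have hQ : IsStarProjection Q := hAp.isStarProjection.one_sub
  have hQA : Q * Aᵀ = 0 := by
    rw [← hQ.transpose_eq, ← transpose_mul, hAp.mul_one_sub_mul, transpose_zero]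
  have hQB : frobNorm (Q * B) ^ 2 = -trace (Q * (Aᵀ * A - B * Bᵀ) * Qᵀ) := by
    rw [frobNorm_sq, mul_sub, ← Matrix.mul_assoc Q Aᵀ, hQA, Matrix.zero_mul, zero_sub, neg_mul,
      trace_neg, neg_neg, transpose_mul, Matrix.mul_assoc, Matrix.mul_assoc, Matrix.mul_assoc]
  have hε₀ : 0 ≤ ε := (opNorm_nonneg _).trans hε
  refine ⟨?_, mul_le_mul_of_nonneg_right hQ.trace_le hε₀⟩
  calc frobNorm (Q * B) ^ 2 = -trace (Q * (Aᵀ * A - B * Bᵀ) * Qᵀ) := hQB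
    _ ≤ opNorm (Aᵀ * A - B * Bᵀ) * frobNorm Q ^ 2 := neg_trace_mul_mul_transpose_le Q _
    _ = opNorm (Aᵀ * A - B * Bᵀ) * trace Q := by rw [hQ.trace_eq_frobNorm_sq]
    _ ≤ ε * trace Q := mul_le_mul_of_nonneg_right hε hQ.trace_nonneg
    _ = trace Q * ε := mul_comm _ _
end

section
/- Let C_0 : ℝ^P → ℝ be a nonnegative differentiable function satisfying the α-Polyak–Łojasiewicz inequality ‖∇C_0(θ)‖₂² ≥ (α/2)C_0(θ) for all θ in the closed ball B(θ_0, r_0). Then for any λ > 0, the regularized function C_λ(θ) = C_0(θ) + (λ/2)‖θ‖₂² satisfies, for all θ ∈ B(θ_0, r_0), the shifted inequality ‖∇C_λ(θ)‖₂² ≥ (α/4)(C_λ(θ) − λ m_λ), where m_λ = (1 + √(4λ/α))²(‖θ_0‖₂ + r_0)². -/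
open Real

/-!
The gradient of the regularized cost is `∇C₀ θ + λ θ`, and `‖a + b‖² ≥ ‖a‖²/2 - ‖b‖²` turns the
PL inequality for `C₀` into `‖∇C_λ θ‖² ≥ (α/4) C₀ θ - λ² ‖θ‖²`. On the ball `‖θ‖ ≤ ‖θ₀‖ + r₀`, so
the remaining terms `(α/8 + λ) λ ‖θ‖²` are absorbed by `(α/4) λ m_λ`, because
`(α/4)(1 + √(4λ/α))² = α/4 + (α/2)√(4λ/α) + λ ≥ α/8 + λ`.
-/

section Gradient

variable {E : Type*} [NormedAddCommGroup E] [InnerProductSpace ℝ E] [CompleteSpace E]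

theorem hasGradientAt_const_mul_norm_sq_div_two (c : ℝ) (x : E) :
    HasGradientAt (fun y : E => c / 2 * ‖y‖ ^ 2) (c • x) x := by
  rw [hasGradientAt_iff_hasFDerivAt]
  refine ((hasStrictFDerivAt_norm_sq x).hasFDerivAt.const_mul (c / 2)).congr_fderiv ?_
  ext y
  simp only [smul_apply, innerSL_apply_apply,
    InnerProductSpace.toDual_apply_apply, real_inner_smul_left, smul_eq_mul]
  ring

theorem gradient_add_const_mul_norm_sq_div_two {f : E → ℝ} {x : E} (hf : DifferentiableAt ℝ f x)
    (c : ℝ) : gradient (fun y => f y + c / 2 * ‖y‖ ^ 2) x = gradient f x + c • x := by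
  refine HasGradientAt.gradient ?_
  rw [hasGradientAt_iff_hasFDerivAt, map_add]
  exact hf.hasGradientAt.hasFDerivAt.add (hasGradientAt_const_mul_norm_sq_div_two c x).hasFDerivAt

end Gradient

theorem norm_sq_div_two_sub_norm_sq_le_norm_add_sq {E : Type*} [SeminormedAddCommGroup E]
    (a b : E) : ‖a‖ ^ 2 / 2 - ‖b‖ ^ 2 ≤ ‖a + b‖ ^ 2 := by
  have hab : ‖a‖ ≤ ‖a + b‖ + ‖b‖ := by simpa using norm_sub_le (a + b) b
  have hsq : ‖a‖ ^ 2 ≤ 2 * (‖a + b‖ ^ 2 + ‖b‖ ^ 2) :=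
    (pow_le_pow_left₀ (norm_nonneg a) hab 2).trans add_sq_le
  linarith

theorem add_le_quarter_mul_one_add_sqrt_sq {α lam : ℝ} (hα : 0 < α) (hlam : 0 ≤ lam) :
    α / 8 + lam ≤ α / 4 * (1 + √(4 * lam / α)) ^ 2 := by
  have hs : √(4 * lam / α) ^ 2 = 4 * lam / α := sq_sqrt (by positivity)
  have hexpand : α / 4 * (1 + √(4 * lam / α)) ^ 2 = α / 4 + α / 2 * √(4 * lam / α) + lam := by
    rw [add_sq, hs]
    field_simp
    ring
  have : 0 ≤ α / 2 * √(4 * lam / α) := by positivity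
  linarith

theorem statement8_general
    (P : ℕ)
    (C0 : EuclideanSpace ℝ (Fin P) → ℝ)
    (θ0 : EuclideanSpace ℝ (Fin P))
    (r0 α lam : ℝ)
    (hα : 0 < α) (hlam : 0 < lam)
    (hdiff : Differentiable ℝ C0)
    (hPL : ∀ θ ∈ Metric.closedBall θ0 r0, (α / 2) * C0 θ ≤ ‖gradient C0 θ‖ ^ 2) :
    ∀ θ ∈ Metric.closedBall θ0 r0,
      (α / 4) * ((C0 θ + (lam / 2) * ‖θ‖ ^ 2) -
          lam * ((1 + Real.sqrt (4 * lam / α)) ^ 2 * (‖θ0‖ + r0) ^ 2)) ≤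
        ‖gradient (fun θ => C0 θ + (lam / 2) * ‖θ‖ ^ 2) θ‖ ^ 2 := by
  intro θ hθ
  rw [gradient_add_const_mul_norm_sq_div_two (hdiff θ)]
  set m := (1 + √(4 * lam / α)) ^ 2
  have hθ_sq : ‖θ‖ ^ 2 ≤ (‖θ0‖ + r0) ^ 2 :=
    pow_le_pow_left₀ (norm_nonneg θ) (norm_le_of_mem_closedBall hθ) 2
  have hcoeff : α / 8 + lam ≤ α / 4 * m := add_le_quarter_mul_one_add_sqrt_sq hα hlam.le
  have habsorb : (α / 8 + lam) * ‖θ‖ ^ 2 ≤ α / 4 * m * (‖θ0‖ + r0) ^ 2 :=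
    mul_le_mul hcoeff hθ_sq (sq_nonneg _) (by positivity)
  calc (α / 4) * ((C0 θ + (lam / 2) * ‖θ‖ ^ 2) - lam * (m * (‖θ0‖ + r0) ^ 2))
      ≤ (α / 2) * C0 θ / 2 - ‖lam • θ‖ ^ 2 := by
        rw [norm_smul, Real.norm_of_nonneg hlam.le]
        linarith [mul_le_mul_of_nonneg_left habsorb hlam.le]
    _ ≤ ‖gradient C0 θ‖ ^ 2 / 2 - ‖lam • θ‖ ^ 2 := by linarith [hPL θ hθ]
    _ ≤ ‖gradient C0 θ + lam • θ‖ ^ 2 := norm_sq_div_two_sub_norm_sq_le_norm_add_sq _ _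

/-- Proposition 4.2, first part: if `C₀` satisfies the `α`-PL inequality on a
ball, then the `λ`-regularized cost satisfies a shifted `α/4`-PL inequality on the same ball. -/
theorem statement8
    (P : ℕ)
    (C0 : EuclideanSpace ℝ (Fin P) → ℝ)
    (θ0 : EuclideanSpace ℝ (Fin P))
    (r0 α lam : ℝ)
    (hr0 : 0 < r0) (hα : 0 < α) (hlam : 0 < lam)
    (hC0nonneg : ∀ θ, 0 ≤ C0 θ)
    (hdiff : Differentiable ℝ C0)
    (hPL : ∀ θ ∈ Metric.closedBall θ0 r0, (α / 2) * C0 θ ≤ ‖gradient C0 θ‖ ^ 2) :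
    ∀ θ ∈ Metric.closedBall θ0 r0,
      (α / 4) * ((C0 θ + (lam / 2) * ‖θ‖ ^ 2) -
          lam * ((1 + Real.sqrt (4 * lam / α)) ^ 2 * (‖θ0‖ + r0) ^ 2)) ≤
        ‖gradient (fun θ => C0 θ + (lam / 2) * ‖θ‖ ^ 2) θ‖ ^ 2 :=
  statement8_general P C0 θ0 r0 α lam hα hlam hdiff hPL
end

section
/- Let C_0 : ℝ^P → ℝ be a nonnegative differentiable function satisfying ‖∇C_0(θ)‖₂² ≥ (α/2)C_0(θ) for all θ ∈ B(θ_0, r_0), let λ > 0, and set C_λ(θ) = C_0(θ) + (λ/2)‖θ‖₂² and m_λ = (1 + √(4λ/α))²(‖θ_0‖₂ + r_0)². Assume r_0 ≥ 8√(C_λ(θ_0)/α), ∇C_0 is β1-Lipschitz on B(θ_0, r_0), C_λ(θ_0) > 2λ m_λ, and let 0 < η < 1/(2β1). Then there exists k1 ≤ ⌈log(λ m_λ/(C_λ(θ_0) − λ m_λ)) / log(1 − ηα/8)⌉ such that the gradient descent iterates θ_{k+1} = θ_k − η∇C_λ(θ_k) satisfy C_λ(θ_{k1}) ≤ 2λ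 m_λ and ‖θ_{k1} − θ_0‖₂ ≤ 8√(C_λ(θ_0)/α) ≤ r_0. -/
open Real Metric
open scoped RealInnerProductSpace

/-!
Write `F = C₀ + (λ/2)‖·‖²`. While an iterate lies in the ball and `F` is above the plateau `2λm`,
the regularizer is small compared with `F` (`λ‖θ‖² ≤ λm < F/2`), so the PL inequality of `C₀`
passes to `F` with constant `18α/49`, and the descent lemma for the `(β₁ + λ)`-smooth `F` gives
`F(θₖ₊₁) ≤ (1 - ηα/8) F(θₖ)`. The step length `η‖∇F(θₖ)‖` is at most
`(20/3)(√(F(θₖ)/α) - √(F(θₖ₊₁)/α))`, so `‖θₖ - θ₀‖ + (20/3)√(F(θₖ)/α)` never increases: the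
iterates stay in the ball until the geometric decay reaches the plateau.

A nonnegative function whose gradient is `β₁`-Lipschitz on a ball cannot have a large gradient
far from the boundary, since a gradient step would make it negative. This keeps the next iterate
in the ball, and at `θ₀` it gives `α ≤ 4β₁`; the hypotheses on `r₀` and `m` force `20λ ≤ α`.
-/

section RealInequalities

variable {lam α a c r : ℝ}

theorem mul_sqrt_div_sq (hc : 0 ≤ c) (hα : 0 < α) : α * √(c / α) ^ 2 = c := by
  rw [sq_sqrt (div_nonneg hc hα.le)]; field_simp

theorem lam_mul_le_of_two_mul_sq_le (hlam : 0 ≤ lam) (hα : 0 < α) (hlamα : 20 * lam ≤ α)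
    (h : 2 * lam * a ^ 2 ≤ c) : lam * a ≤ α * √(c / α) / 6 := by
  have hc : 0 ≤ c := le_trans (by positivity) h
  have hs := mul_sqrt_div_sq hc hα
  refine le_of_pow_le_pow_left₀ two_ne_zero (by positivity) ?_
  nlinarith [mul_le_mul_of_nonneg_left h hlam, mul_le_mul_of_nonneg_right hlamα hc]

theorem mul_sq_le_of_sqrt_div_le (hc : 0 ≤ c) (hα : 0 < α) (h : 8 * √(c / α) ≤ r) :
    64 * c ≤ α * r ^ 2 := by
  have := pow_le_pow_left₀ (by positivity) h 2
  rw [mul_pow, sq_sqrt (div_nonneg hc hα.le), ← mul_div_assoc, div_le_iff₀ hα] at this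
  linarith

theorem twenty_mul_le_of_two_mul_lt (hlam : 0 < lam) (hα : 0 < α) (ha : 0 ≤ a) (hr : 0 ≤ r)
    (hc : 64 * c ≤ α * r ^ 2)
    (hinit : 2 * lam * ((1 + √(4 * lam / α)) ^ 2 * (a + r) ^ 2) < c) : 20 * lam ≤ α := by
  set t := √(4 * lam / α)
  have ht : α * t ^ 2 = 4 * lam := mul_sqrt_div_sq (by positivity) hα
  have hm : t ^ 2 * r ^ 2 ≤ (1 + t) ^ 2 * (a + r) ^ 2 := by
    rw [← mul_pow, ← mul_pow]
    exact pow_le_pow_left₀ (by positivity) (by nlinarith [sqrt_nonneg (4 * lam / α)]) 2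
  have h1 : 2 * lam * (t ^ 2 * r ^ 2) < c :=
    lt_of_le_of_lt (mul_le_mul_of_nonneg_left hm (by positivity)) hinit
  have h2 : 8 * lam ^ 2 * r ^ 2 < α * c := by
    have : α * (2 * lam * (t ^ 2 * r ^ 2)) = 8 * lam ^ 2 * r ^ 2 := by
      linear_combination (2 * lam * r ^ 2) * ht
    linarith [mul_lt_mul_of_pos_left h1 hα]
  have : 512 * lam ^ 2 * r ^ 2 < α ^ 2 * r ^ 2 := by
    nlinarith [mul_le_mul_of_nonneg_left hc hα.le]
  nlinarith [lt_of_mul_lt_mul_right this (sq_nonneg r)]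

theorem pow_ceil_log_div_log_le (ha0 : 0 < a) (ha1 : a < 1) (hc : 0 < c) :
    a ^ ⌈log c / log a⌉₊ ≤ c := by
  rw [pow_le_iff_le_log ha0 hc, ← div_le_iff_of_neg (log_neg ha0 ha1)]
  exact Nat.le_ceil _

end RealInequalities

variable {E : Type*} [NormedAddCommGroup E]

theorem norm_sq_le_of_mem_closedBall {r t : ℝ} {θ θ0 : E} (hθ : θ ∈ closedBall θ0 r)
    (ht : 0 ≤ t) : ‖θ‖ ^ 2 ≤ (1 + t) ^ 2 * (‖θ0‖ + r) ^ 2 := by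
  have hθr : ‖θ‖ ≤ ‖θ0‖ + r :=
    (norm_le_norm_add_norm_sub' θ θ0).trans (add_le_add_right (mem_closedBall_iff_norm.1 hθ) _)
  calc ‖θ‖ ^ 2 ≤ (‖θ0‖ + r) ^ 2 := pow_le_pow_left₀ (norm_nonneg θ) hθr 2
    _ ≤ (1 + t) ^ 2 * (‖θ0‖ + r) ^ 2 :=
      le_mul_of_one_le_left (sq_nonneg _) (one_le_pow₀ (by linarith))

variable [InnerProductSpace ℝ E]

theorem norm_sub_smul_sub_le (x v θ0 : E) {t : ℝ} (ht : 0 ≤ t) :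
    ‖x - t • v - θ0‖ ≤ ‖x - θ0‖ + t * ‖v‖ := by
  rw [sub_right_comm, ← norm_smul_of_nonneg ht]; exact norm_sub_le _ _

variable [CompleteSpace E]

section Smooth

variable {f : E → ℝ} {s : Set E} {L : ℝ}

theorem Convex.le_add_inner_gradient_add_mul_norm_sq (hs : Convex ℝ s) (hf : Differentiable ℝ f)
    (hL : ∀ a ∈ s, ∀ b ∈ s, ‖gradient f a - gradient f b‖ ≤ L * ‖a - b‖)
    {x y : E} (hx : x ∈ s) (hy : y ∈ s) :
    f y ≤ f x + ⟪gradient f x, y - x⟫ + L / 2 * ‖y - x‖ ^ 2 := by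
  set v := y - x
  have hline : ∀ t : ℝ, HasDerivAt (fun t : ℝ => f (x + t • v))
      ⟪gradient f (x + t • v), v⟫ t := fun t => by
    have hv : HasDerivAt (fun t : ℝ => x + t • v) v t := by
      simpa using ((hasDerivAt_id t).smul_const v).const_add x
    have := (hf (x + t • v)).hasGradientAt.hasFDerivAt.comp_hasDerivAt t hv
    rwa [InnerProductSpace.toDual_apply_apply] at this
  have hB : ∀ t : ℝ, HasDerivAt
      (fun t : ℝ => f x + t * ⟪gradient f x, v⟫ + L / 2 * ‖v‖ ^ 2 * t ^ 2)
      (⟪gradient f x, v⟫ + L * ‖v‖ ^ 2 * t) t := fun t => by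
    have := (((hasDerivAt_id t).mul_const ⟪gradient f x, v⟫).const_add (f x)).add
      ((hasDerivAt_pow 2 t).const_mul (L / 2 * ‖v‖ ^ 2))
    exact this.congr_deriv (by simp; ring)
  have hbound : ∀ t ∈ Set.Ico (0 : ℝ) 1,
      ⟪gradient f (x + t • v), v⟫ ≤ ⟪gradient f x, v⟫ + L * ‖v‖ ^ 2 * t := by
    intro t ht
    have hxt : x + t • v ∈ s := by
      simpa [v, smul_sub, sub_smul, add_comm, add_sub_assoc] using
        hs.add_smul_sub_mem hx hy ⟨ht.1, ht.2.le⟩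
    calc ⟪gradient f (x + t • v), v⟫
        = ⟪gradient f x, v⟫ + ⟪gradient f (x + t • v) - gradient f x, v⟫ := by
          rw [inner_sub_left]; ring
      _ ≤ ⟪gradient f x, v⟫ + L * ‖x + t • v - x‖ * ‖v‖ := by
          gcongr
          exact (real_inner_le_norm _ _).trans
            (mul_le_mul_of_nonneg_right (hL _ hxt _ hx) (norm_nonneg v))
      _ = ⟪gradient f x, v⟫ + L * ‖v‖ ^ 2 * t := by
          rw [add_sub_cancel_left, norm_smul, norm_of_nonneg ht.1]; ring
  have := image_le_of_deriv_right_le_deriv_boundary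
    (fun t _ => (hline t).continuousAt.continuousWithinAt)
    (fun t _ => (hline t).hasDerivWithinAt) (by simp)
    (fun t _ => (hB t).continuousAt.continuousWithinAt)
    (fun t _ => (hB t).hasDerivWithinAt) hbound (Set.right_mem_Icc.2 zero_le_one)
  simpa [v] using this

theorem Convex.apply_sub_smul_gradient_le (hs : Convex ℝ s) (hf : Differentiable ℝ f)
    (hL : ∀ a ∈ s, ∀ b ∈ s, ‖gradient f a - gradient f b‖ ≤ L * ‖a - b‖)
    {x : E} {t : ℝ} (hx : x ∈ s) (hxt : x - t • gradient f x ∈ s) :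
    f (x - t • gradient f x) ≤ f x - t * (1 - L * t / 2) * ‖gradient f x‖ ^ 2 := by
  have := hs.le_add_inner_gradient_add_mul_norm_sq hf hL hx hxt
  rw [sub_sub_cancel_left, inner_neg_right, real_inner_smul_right, real_inner_self_eq_norm_sq,
    norm_neg, norm_smul, Real.norm_eq_abs, mul_pow, sq_abs] at this
  linarith

theorem Convex.mul_norm_gradient_sq_le (hs : Convex ℝ s) (hf : Differentiable ℝ f)
    (hL : ∀ a ∈ s, ∀ b ∈ s, ‖gradient f a - gradient f b‖ ≤ L * ‖a - b‖)
    {x : E} {t : ℝ} (hx : x ∈ s) (hxt : x - t • gradient f x ∈ s)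
    (hft : 0 ≤ f (x - t • gradient f x)) (ht : 0 ≤ t) (hLt : L * t ≤ 1) :
    t * ‖gradient f x‖ ^ 2 ≤ 2 * f x := by
  have := hs.apply_sub_smul_gradient_le hf hL hx hxt
  nlinarith [mul_nonneg ht (sq_nonneg ‖gradient f x‖)]

end Smooth

noncomputable def regularized (f : E → ℝ) (lam : ℝ) (θ : E) : ℝ := f θ + lam / 2 * ‖θ‖ ^ 2

theorem hasGradientAt_regularized {f : E → ℝ} {x : E} (hf : DifferentiableAt ℝ f x) (lam : ℝ) :
    HasGradientAt (regularized f lam) (gradient f x + lam • x) x := by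
  rw [hasGradientAt_iff_hasFDerivAt]
  refine (hf.hasFDerivAt.add
    ((hasStrictFDerivAt_norm_sq x).hasFDerivAt.const_mul (lam / 2))).congr_fderiv ?_
  ext v
  simp only [InnerProductSpace.toDual_apply_apply, add_apply,
    smul_apply, innerSL_apply_apply, inner_add_left, real_inner_smul_left,
    inner_gradient_left, smul_eq_mul, nsmul_eq_mul]
  ring

theorem gradient_regularized {f : E → ℝ} (hf : Differentiable ℝ f) (lam : ℝ) (x : E) :
    gradient (regularized f lam) x = gradient f x + lam • x :=
  (hasGradientAt_regularized (hf x) lam).gradient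

theorem norm_gradient_regularized_sub_le {f : E → ℝ} {s : Set E} {L lam : ℝ}
    (hf : Differentiable ℝ f) (hlam : 0 ≤ lam)
    (hL : ∀ a ∈ s, ∀ b ∈ s, ‖gradient f a - gradient f b‖ ≤ L * ‖a - b‖) :
    ∀ a ∈ s, ∀ b ∈ s, ‖gradient (regularized f lam) a - gradient (regularized f lam) b‖ ≤
      (L + lam) * ‖a - b‖ := by
  intro a ha b hb
  rw [gradient_regularized hf, gradient_regularized hf, add_sub_add_comm, ← smul_sub]
  calc _ ≤ ‖gradient f a - gradient f b‖ + ‖lam • (a - b)‖ := norm_add_le _ _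
    _ ≤ L * ‖a - b‖ + lam * ‖a - b‖ := by
      rw [norm_smul, norm_of_nonneg hlam]; gcongr; exact hL a ha b hb
    _ = (L + lam) * ‖a - b‖ := by ring

section GradientDescent

variable {f : E → ℝ} {θ0 x : E} {r α β lam η : ℝ}

theorem le_four_mul_of_pl_of_lipschitz_gradient (hf0 : ∀ θ, 0 ≤ f θ) (hf : Differentiable ℝ f)
    (hLip : ∀ a ∈ closedBall x r, ∀ b ∈ closedBall x r,
      ‖gradient f a - gradient f b‖ ≤ β * ‖a - b‖)
    (hr : 0 ≤ r) (hβ : 0 < β) (hPL : α / 2 * f x ≤ ‖gradient f x‖ ^ 2) (hfx : 0 < f x)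
    (hfr : 8 * f x < α * r ^ 2) : α ≤ 4 * β := by
  have hxB : x ∈ closedBall x r := mem_closedBall_self hr
  have hB (t : ℝ) (ht : 0 ≤ t) (htr : t * ‖gradient f x‖ ≤ r) :
      x - t • gradient f x ∈ closedBall x r := by
    have := norm_sub_smul_sub_le x (gradient f x) x ht
    rw [sub_self, norm_zero, zero_add] at this
    exact mem_closedBall_iff_norm.2 (this.trans htr)
  by_cases hnear : ‖gradient f x‖ ≤ β * r
  · have h := (convex_closedBall x r).mul_norm_gradient_sq_le hf hLip hxB
      (hB (1 / β) (by positivity) (by rw [one_div_mul_eq_div, div_le_iff₀ hβ]; linarith)) (hf0 _)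
      (by positivity) (by rw [mul_one_div_cancel hβ.ne'])
    rw [one_div_mul_eq_div, div_le_iff₀ hβ] at h
    nlinarith
  · -- then a step of length `r` along `-∇f x` would push `f` below zero
    have hg : 0 < ‖gradient f x‖ := lt_of_le_of_lt (by positivity) (not_le.1 hnear)
    have h := (convex_closedBall x r).mul_norm_gradient_sq_le hf hLip hxB
      (hB (r / ‖gradient f x‖) (by positivity) (by rw [div_mul_cancel₀ _ hg.ne'])) (hf0 _)
      (by positivity)
      (by rw [mul_div_assoc', div_le_one hg]; linarith)
    rw [sq, ← mul_assoc, div_mul_cancel₀ _ hg.ne'] at h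
    nlinarith [mul_le_mul_of_nonneg_left hPL (sq_nonneg r), mul_self_le_mul_self
      (by positivity) h]

theorem le_norm_gradient_regularized (hf : Differentiable ℝ f)
    (hPL : α / 2 * f x ≤ ‖gradient f x‖ ^ 2)
    (hlam : 0 ≤ lam) (hα : 0 < α) (hlamα : 20 * lam ≤ α)
    (hx : 2 * lam * ‖x‖ ^ 2 ≤ regularized f lam x) :
    3 / 7 * α * √(regularized f lam x / α) ≤ ‖gradient (regularized f lam) x‖ := by
  set s := √(regularized f lam x / α)
  have hs : α * s ^ 2 = regularized f lam x := mul_sqrt_div_sq (le_trans (by positivity) hx) hα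
  have hlamx := lam_mul_le_of_two_mul_sq_le hlam hα hlamα hx
  have hg : 3 / 5 * (α * s) ≤ ‖gradient f x‖ := by
    refine le_of_pow_le_pow_left₀ two_ne_zero (norm_nonneg _) ?_
    unfold regularized at hs hx
    nlinarith
  have htri : ‖gradient f x‖ ≤ ‖gradient (regularized f lam) x‖ + lam * ‖x‖ := by
    rw [gradient_regularized hf, ← norm_smul_of_nonneg hlam]
    simpa using norm_sub_le (gradient f x + lam • x) (lam • x)
  nlinarith [mul_nonneg hα.le (sqrt_nonneg (regularized f lam x / α))]

theorem mul_norm_gradient_regularized_le (hf0 : ∀ θ, 0 ≤ f θ) (hf : Differentiable ℝ f)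
    (hLip : ∀ a ∈ closedBall θ0 r, ∀ b ∈ closedBall θ0 r,
      ‖gradient f a - gradient f b‖ ≤ β * ‖a - b‖)
    (hβ : 0 ≤ β) (hlam : 0 ≤ lam) (hα : 0 < α) (hlamα : 20 * lam ≤ α)
    (hη : 0 < η) (hηβ : η * β ≤ 1 / 2) (hηα : η * α ≤ 2)
    (hxr : ‖x - θ0‖ + 20 / 3 * √(regularized f lam x / α) ≤ r)
    (hx : 2 * lam * ‖x‖ ^ 2 < regularized f lam x) :
    η * ‖gradient (regularized f lam) x‖ ≤ r - ‖x - θ0‖ := by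
  set s := √(regularized f lam x / α)
  set δ := r - ‖x - θ0‖
  have hs : α * s ^ 2 = regularized f lam x := mul_sqrt_div_sq (le_trans (by positivity) hx.le) hα
  have hs0 : 0 < s := Real.sqrt_pos.2 (div_pos (lt_of_le_of_lt (by positivity) hx) hα)
  have hδ : 20 / 3 * s ≤ δ := by linarith
  have hxB : x ∈ closedBall θ0 r := mem_closedBall_iff_norm.2 (by linarith)
  have hlamx := lam_mul_le_of_two_mul_sq_le hlam hα hlamα hx.le
  have htri : ‖gradient (regularized f lam) x‖ ≤ ‖gradient f x‖ + lam * ‖x‖ := by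
    rw [gradient_regularized hf, ← norm_smul_of_nonneg hlam]
    exact norm_add_le _ _
  have hg : η * ‖gradient f x‖ ≤ δ / 2 + 6 / 5 * s := by
    by_cases hnear : η * ‖gradient f x‖ ≤ δ / 2
    · linarith
    -- otherwise the shorter step of length `δ / 2` stays in the ball, and `f ≥ 0` there
    have hg0 : 0 < ‖gradient f x‖ := pos_of_mul_pos_right (by linarith) hη.le
    set t := δ / (2 * ‖gradient f x‖)
    have ht0 : 0 ≤ t := div_nonneg (by linarith) (by positivity)
    have ht : t * ‖gradient f x‖ = δ / 2 := by simp only [t]; field_simp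
    have htη : t < η := lt_of_mul_lt_mul_right (by linarith) (norm_nonneg (gradient f x))
    have hxt : x - t • gradient f x ∈ closedBall θ0 r := by
      rw [mem_closedBall_iff_norm]
      linarith [norm_sub_smul_sub_le x (gradient f x) θ0 ht0]
    have hdescent := (convex_closedBall θ0 r).mul_norm_gradient_sq_le hf hLip hxB hxt (hf0 _) ht0
      (by nlinarith)
    have hfF : f x ≤ regularized f lam x := by unfold regularized; nlinarith
    have : δ * (η * ‖gradient f x‖) ≤ δ * (6 / 5 * s) := by
      nlinarith [mul_le_mul_of_nonneg_right hηα (sq_nonneg s)]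
    nlinarith
  nlinarith [mul_le_mul_of_nonneg_left htri hη.le, mul_le_mul_of_nonneg_left hlamx hη.le]

theorem regularized_sub_smul_gradient_le (hf0 : ∀ θ, 0 ≤ f θ) (hf : Differentiable ℝ f)
    (hLip : ∀ a ∈ closedBall θ0 r, ∀ b ∈ closedBall θ0 r,
      ‖gradient f a - gradient f b‖ ≤ β * ‖a - b‖)
    (hβ : 0 ≤ β) (hlam : 0 ≤ lam) (hα : 0 < α) (hlamα : 20 * lam ≤ α)
    (hη : 0 < η) (hηβ : η * β ≤ 1 / 2) (hηα : η * α ≤ 2)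
    (hxr : ‖x - θ0‖ + 20 / 3 * √(regularized f lam x / α) ≤ r)
    (hx : 2 * lam * ‖x‖ ^ 2 < regularized f lam x) :
    regularized f lam (x - η • gradient (regularized f lam) x) ≤
      regularized f lam x - 7 / 10 * η * ‖gradient (regularized f lam) x‖ ^ 2 := by
  have hstep := mul_norm_gradient_regularized_le hf0 hf hLip hβ hlam hα hlamα hη hηβ hηα hxr hx
  have hxB : x ∈ closedBall θ0 r :=
    mem_closedBall_iff_norm.2 (by linarith [sqrt_nonneg (regularized f lam x / α)])
  have hyB : x - η • gradient (regularized f lam) x ∈ closedBall θ0 r := by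
    have := norm_sub_smul_sub_le x (gradient (regularized f lam) x) θ0 hη.le
    exact mem_closedBall_iff_norm.2 (by linarith)
  have hdescent := (convex_closedBall θ0 r).apply_sub_smul_gradient_le
    (fun θ => (hasGradientAt_regularized (hf θ) lam).differentiableAt)
    (norm_gradient_regularized_sub_le hf hlam hLip) hxB hyB
  have hηL : (β + lam) * η ≤ 3 / 5 := by nlinarith
  nlinarith [mul_le_mul_of_nonneg_right hηL
    (mul_nonneg hη.le (sq_nonneg ‖gradient (regularized f lam) x‖))]

theorem regularized_gradient_step_le (hf0 : ∀ θ, 0 ≤ f θ) (hf : Differentiable ℝ f)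
    (hPL : ∀ θ ∈ closedBall θ0 r, α / 2 * f θ ≤ ‖gradient f θ‖ ^ 2)
    (hLip : ∀ a ∈ closedBall θ0 r, ∀ b ∈ closedBall θ0 r,
      ‖gradient f a - gradient f b‖ ≤ β * ‖a - b‖)
    (hβ : 0 ≤ β) (hlam : 0 ≤ lam) (hα : 0 < α) (hlamα : 20 * lam ≤ α)
    (hη : 0 < η) (hηβ : η * β ≤ 1 / 2) (hηα : η * α ≤ 2)
    (hxr : ‖x - θ0‖ + 20 / 3 * √(regularized f lam x / α) ≤ r)
    (hx : 2 * lam * ‖x‖ ^ 2 < regularized f lam x) :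
    regularized f lam (x - η • gradient (regularized f lam) x) ≤
        (1 - η * α / 8) * regularized f lam x ∧
      ‖x - η • gradient (regularized f lam) x - θ0‖ +
          20 / 3 * √(regularized f lam (x - η • gradient (regularized f lam) x) / α) ≤
        ‖x - θ0‖ + 20 / 3 * √(regularized f lam x / α) := by
  set y := x - η • gradient (regularized f lam) x
  set G := ‖gradient (regularized f lam) x‖
  set sx := √(regularized f lam x / α)
  set sy := √(regularized f lam y / α)
  have hFy0 : 0 ≤ regularized f lam y := by unfold regularized; have := hf0 y; positivity
  have hsx : α * sx ^ 2 = regularized f lam x :=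
    mul_sqrt_div_sq (le_trans (by positivity) hx.le) hα
  have hsy : α * sy ^ 2 = regularized f lam y := mul_sqrt_div_sq hFy0 hα
  have hsx0 : 0 < sx := Real.sqrt_pos.2 (div_pos (lt_of_le_of_lt (by positivity) hx) hα)
  have hxB : x ∈ closedBall θ0 r := mem_closedBall_iff_norm.2 (by linarith)
  have hG : 3 / 7 * α * sx ≤ G := le_norm_gradient_regularized hf (hPL x hxB) hlam hα hlamα hx.le
  have hdescent : regularized f lam y ≤ regularized f lam x - 7 / 10 * η * G ^ 2 :=
    regularized_sub_smul_gradient_le hf0 hf hLip hβ hlam hα hlamα hη hηβ hηα hxr hx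
  have hGsq : (3 / 7 * α * sx) ^ 2 ≤ G ^ 2 := pow_le_pow_left₀ (by positivity) hG 2
  refine ⟨by nlinarith [mul_le_mul_of_nonneg_left hGsq hη.le], ?_⟩
  have hsyx : sy ≤ sx :=
    le_of_pow_le_pow_left₀ two_ne_zero hsx0.le (by nlinarith [mul_nonneg hη.le (sq_nonneg G)])
  have hmove : η * G ≤ 20 / 3 * (sx - sy) := by
    refine le_of_mul_le_mul_right ?_ (by positivity : (0 : ℝ) < 3 / 10 * α * sx)
    nlinarith [mul_le_mul_of_nonneg_left hG (mul_nonneg hη.le (norm_nonneg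
        (gradient (regularized f lam) x))),
      mul_nonneg hα.le (mul_self_nonneg (sx - sy))]
  linarith [norm_sub_smul_sub_le x (gradient (regularized f lam) x) θ0 hη.le]

theorem regularized_gradient_descent_invariant {θs : ℕ → E} (hθs0 : θs 0 = θ0)
    (hstep : ∀ k, θs (k + 1) = θs k - η • gradient (regularized f lam) (θs k))
    (hf0 : ∀ θ, 0 ≤ f θ) (hf : Differentiable ℝ f)
    (hPL : ∀ θ ∈ closedBall θ0 r, α / 2 * f θ ≤ ‖gradient f θ‖ ^ 2)
    (hLip : ∀ a ∈ closedBall θ0 r, ∀ b ∈ closedBall θ0 r,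
      ‖gradient f a - gradient f b‖ ≤ β * ‖a - b‖)
    (hβ : 0 ≤ β) (hlam : 0 ≤ lam) (hα : 0 < α) (hlamα : 20 * lam ≤ α)
    (hη : 0 < η) (hηβ : η * β ≤ 1 / 2) (hηα : η * α ≤ 2)
    (hr : 20 / 3 * √(regularized f lam θ0 / α) ≤ r)
    {M : ℝ} (hM : ∀ θ ∈ closedBall θ0 r, lam * ‖θ‖ ^ 2 ≤ M)
    (k : ℕ) (hk : ∀ j < k, 2 * M < regularized f lam (θs j)) :
    ‖θs k - θ0‖ + 20 / 3 * √(regularized f lam (θs k) / α) ≤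
        20 / 3 * √(regularized f lam θ0 / α) ∧
      regularized f lam (θs k) ≤ (1 - η * α / 8) ^ k * regularized f lam θ0 := by
  induction k with
  | zero => simp [hθs0]
  | succ k ih =>
    obtain ⟨hdist, hdecay⟩ := ih fun j hj => hk j (Nat.lt_succ_of_lt hj)
    have hxr := hdist.trans hr
    have hxB : θs k ∈ closedBall θ0 r :=
      mem_closedBall_iff_norm.2 (by linarith [sqrt_nonneg (regularized f lam (θs k) / α)])
    have hx : 2 * lam * ‖θs k‖ ^ 2 < regularized f lam (θs k) := by
      linarith [hM _ hxB, hk k k.lt_succ_self]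
    obtain ⟨hcontract, hmove⟩ :=
      regularized_gradient_step_le hf0 hf hPL hLip hβ hlam hα hlamα hη hηβ hηα hxr hx
    rw [hstep k]
    refine ⟨hmove.trans hdist, hcontract.trans ?_⟩
    rw [pow_succ', mul_assoc]
    exact mul_le_mul_of_nonneg_left hdecay (by linarith)

theorem exists_regularized_le_of_gradient_descent {θs : ℕ → E} (hθs0 : θs 0 = θ0)
    (hstep : ∀ k, θs (k + 1) = θs k - η • gradient (regularized f lam) (θs k))
    (hf0 : ∀ θ, 0 ≤ f θ) (hf : Differentiable ℝ f)
    (hPL : ∀ θ ∈ closedBall θ0 r, α / 2 * f θ ≤ ‖gradient f θ‖ ^ 2)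
    (hLip : ∀ a ∈ closedBall θ0 r, ∀ b ∈ closedBall θ0 r,
      ‖gradient f a - gradient f b‖ ≤ β * ‖a - b‖)
    (hβ : 0 ≤ β) (hlam : 0 ≤ lam) (hα : 0 < α) (hlamα : 20 * lam ≤ α)
    (hη : 0 < η) (hηβ : η * β ≤ 1 / 2) (hηα : η * α ≤ 2)
    (hr : 20 / 3 * √(regularized f lam θ0 / α) ≤ r)
    {M : ℝ} (hM : ∀ θ ∈ closedBall θ0 r, lam * ‖θ‖ ^ 2 ≤ M)
    {N : ℕ} (hN : (1 - η * α / 8) ^ N * (regularized f lam θ0 - M) ≤ M) :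
    ∃ k ≤ N, regularized f lam (θs k) ≤ 2 * M ∧
      ‖θs k - θ0‖ ≤ 20 / 3 * √(regularized f lam θ0 / α) := by
  classical
  have hinv := regularized_gradient_descent_invariant hθs0 hstep hf0 hf hPL hLip hβ hlam hα
    hlamα hη hηβ hηα hr hM
  have hex : ∃ k, k ≤ N ∧ regularized f lam (θs k) ≤ 2 * M := by
    by_contra! hlt
    have hq : (1 - η * α / 8) ^ N ≤ 1 := pow_le_one₀ (by nlinarith) (by nlinarith)
    have hM0 : 0 ≤ M := le_trans (by positivity) (hM θ0 (mem_closedBall_self (by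
      linarith [sqrt_nonneg (regularized f lam θ0 / α)])))
    nlinarith [(hinv N fun j hj => hlt j hj.le).2, hlt N le_rfl]
  obtain ⟨hkN, hk⟩ := Nat.find_spec hex
  have hfirst : ∀ j < Nat.find hex, 2 * M < regularized f lam (θs j) := fun j hj =>
    not_le.1 fun h => Nat.find_min hex hj ⟨hj.le.trans hkN, h⟩
  refine ⟨Nat.find hex, hkN, hk, ?_⟩
  linarith [(hinv _ hfirst).1, sqrt_nonneg (regularized f lam (θs (Nat.find hex)) / α)]

end GradientDescent

/-- Proposition 4.2, second part: exponential convergence of gradient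
descent on the `λ`-regularized cost, under the PL inequality and a Lipschitz gradient. -/
theorem statement9
    (P : ℕ)
    (C0 : EuclideanSpace ℝ (Fin P) → ℝ)
    (θ0 : EuclideanSpace ℝ (Fin P))
    (r0 α lam β1 η : ℝ)
    (hr0 : 0 < r0) (hα : 0 < α) (hlam : 0 < lam) (hβ1 : 0 < β1)
    (hC0nonneg : ∀ θ, 0 ≤ C0 θ)
    (hdiff : Differentiable ℝ C0)
    -- the α-PL inequality on the ball
    (hPL : ∀ θ ∈ Metric.closedBall θ0 r0, (α / 2) * C0 θ ≤ ‖gradient C0 θ‖ ^ 2)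
    -- ∇C0 is β1-Lipschitz on the ball
    (hLip : ∀ θ ∈ Metric.closedBall θ0 r0, ∀ θ' ∈ Metric.closedBall θ0 r0,
      ‖gradient C0 θ - gradient C0 θ'‖ ≤ β1 * ‖θ - θ'‖)
    -- the radius is large enough
    (hrad : 8 * Real.sqrt ((C0 θ0 + (lam / 2) * ‖θ0‖ ^ 2) / α) ≤ r0)
    -- the initial regularized loss is above the plateau value
    (hinit : 2 * lam * ((1 + Real.sqrt (4 * lam / α)) ^ 2 * (‖θ0‖ + r0) ^ 2) <
      C0 θ0 + (lam / 2) * ‖θ0‖ ^ 2)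
    (hη0 : 0 < η) (hη : η < 1 / (2 * β1))
    -- gradient descent on the regularized loss
    (θs : ℕ → EuclideanSpace ℝ (Fin P))
    (hθs0 : θs 0 = θ0)
    (hstep : ∀ k, θs (k + 1) =
      θs k - η • gradient (fun θ => C0 θ + (lam / 2) * ‖θ‖ ^ 2) (θs k)) :
    ∃ k1 : ℕ,
      k1 ≤ ⌈Real.log (lam * ((1 + Real.sqrt (4 * lam / α)) ^ 2 * (‖θ0‖ + r0) ^ 2) /
              ((C0 θ0 + (lam / 2) * ‖θ0‖ ^ 2) -
                lam * ((1 + Real.sqrt (4 * lam / α)) ^ 2 * (‖θ0‖ + r0) ^ 2))) /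
            Real.log (1 - η * α / 8)⌉₊ ∧
      C0 (θs k1) + (lam / 2) * ‖θs k1‖ ^ 2 ≤
        2 * lam * ((1 + Real.sqrt (4 * lam / α)) ^ 2 * (‖θ0‖ + r0) ^ 2) ∧
      ‖θs k1 - θ0‖ ≤ 8 * Real.sqrt ((C0 θ0 + (lam / 2) * ‖θ0‖ ^ 2) / α) ∧
      8 * Real.sqrt ((C0 θ0 + (lam / 2) * ‖θ0‖ ^ 2) / α) ≤ r0 := by
  set m := (1 + √(4 * lam / α)) ^ 2 * (‖θ0‖ + r0) ^ 2
  set c0 := C0 θ0 + lam / 2 * ‖θ0‖ ^ 2 with hc0_def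
  have hM : ∀ θ ∈ closedBall θ0 r0, lam * ‖θ‖ ^ 2 ≤ lam * m := fun θ hθ =>
    mul_le_mul_of_nonneg_left (norm_sq_le_of_mem_closedBall hθ (sqrt_nonneg _)) hlam.le
  have hθ0 : θ0 ∈ closedBall θ0 r0 := mem_closedBall_self hr0.le
  have hC0θ0 : 0 < C0 θ0 := by nlinarith [hM θ0 hθ0, sq_nonneg ‖θ0‖]
  have hc0 : 64 * c0 ≤ α * r0 ^ 2 := mul_sq_le_of_sqrt_div_le (by positivity) hα hrad
  have hlamα : 20 * lam ≤ α := twenty_mul_le_of_two_mul_lt hlam hα (norm_nonneg θ0) hr0.le hc0 hinit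
  have hαβ : α ≤ 4 * β1 := le_four_mul_of_pl_of_lipschitz_gradient hC0nonneg hdiff hLip hr0.le
    hβ1 (hPL θ0 hθ0) hC0θ0 (by nlinarith [sq_nonneg ‖θ0‖])
  have hηβ : η * β1 ≤ 1 / 2 := by rw [lt_div_iff₀ (by positivity)] at hη; linarith
  have hηα : η * α ≤ 2 := by nlinarith
  have hgap : 0 < c0 - lam * m := by nlinarith [hM θ0 hθ0]
  have hN := pow_ceil_log_div_log_le (a := 1 - η * α / 8) (c := lam * m / (c0 - lam * m))
    (by linarith) (by nlinarith) (div_pos (by positivity) hgap)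
  rw [le_div_iff₀ hgap] at hN
  obtain ⟨k, hkN, hk, hdist⟩ := exists_regularized_le_of_gradient_descent hθs0 hstep hC0nonneg
    hdiff hPL hLip hβ1.le hlam.le hα hlamα hη0 hηβ hηα
    (show 20 / 3 * √(c0 / α) ≤ r0 by linarith [sqrt_nonneg (c0 / α)]) hM hN
  rw [← mul_assoc] at hk
  exact ⟨k, hkN, hk, hdist.trans (show 20 / 3 * √(c0 / α) ≤ 8 * √(c0 / α) by
    linarith [sqrt_nonneg (c0 / α)]), hrad⟩
end
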